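/- arXiv:2307.07097 — 10 statements merged into one kernel-verified Lean document; each statement's English description precedes it below -/
import Mathlib

section
/- For nonempty compact sets A, B ⊆ ℝ, the Lebesgue measure of the Minkowski sum satisfies |A + B| ≥ |A| + |B|. -/
/-! With `a = max A` and `b = min B`, the translates `A + b` and `a + B` lie in `A + B` and meet
only in the point `a + b`, so translation invariance gives `|A| + |B| = |A + b| + |a + B| ≤ |A + B|`. -/

open MeasureTheory Pointwise

theorem Set.add_singleton_inter_singleton_add_subset {α : Type*} [AddCommMonoid α] [PartialOrder α]
    [IsOrderedCancelAddMonoid α] {A B : Set α} {a b : α} (ha : IsGreatest A a) (hb : IsLeast B b) :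
    (A + {b}) ∩ ({a} + B) ⊆ {a + b} := by
  rintro _ ⟨⟨u, hu, b', hb', rfl⟩, a', ha', z, hz, huz⟩
  rw [Set.mem_singleton_iff] at ha' hb'
  subst a' b'
  have hab : a + b ≤ u + b := (add_le_add_right (hb.2 hz) a).trans_eq huz
  rw [Set.mem_singleton_iff, le_antisymm (ha.2 hu) (le_of_add_le_add_right hab)]

theorem measure_add_le_measure_add_of_isGreatest_of_isLeast {G : Type*} [AddCommGroup G]
    [PartialOrder G] [IsOrderedAddMonoid G] [MeasurableSpace G] [MeasurableAdd G]
    (μ : Measure G) [μ.IsAddLeftInvariant] [NullSingletonClass μ] {A B : Set G} {a b : G}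
    (ha : IsGreatest A a) (hb : IsLeast B b) (hB : MeasurableSet B) :
    μ A + μ B ≤ μ (A + B) := by
  have hS : A + {b} = b +ᵥ A := by rw [add_comm]; exact Set.singleton_add
  have hT : {a} + B = a +ᵥ B := Set.singleton_add
  have hinter_null : μ ((A + {b}) ∩ ({a} + B)) = 0 :=
    measure_mono_null (Set.add_singleton_inter_singleton_add_subset ha hb) (measure_singleton _)
  have hunion : (A + {b}) ∪ ({a} + B) ⊆ A + B :=
    Set.union_subset (Set.add_subset_add_left (Set.singleton_subset_iff.2 hb.1))
      (Set.add_subset_add_right (Set.singleton_subset_iff.2 ha.1))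
  calc μ A + μ B = μ (A + {b}) + μ ({a} + B) := by rw [hS, hT, measure_vadd, measure_vadd]
    _ = μ ((A + {b}) ∪ ({a} + B)) := by
      rw [← measure_union_add_inter _ (hT ▸ hB.const_vadd a), hinter_null, add_zero]
    _ ≤ μ (A + B) := measure_mono hunion

theorem bml_one_dim (A B : Set ℝ) (hA : A.Nonempty) (hB : B.Nonempty)
    (hAc : IsCompact A) (hBc : IsCompact B) :
    volume (A + B) ≥ volume A + volume B :=
  measure_add_le_measure_add_of_isGreatest_of_isLeast volume (hAc.isGreatest_sSup hA)
    (hBc.isLeast_sInf hB) hBc.measurableSet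
end

section
/- For nonempty compact sets A, B ⊆ ℝ with |A + B| > 0, equality |A + B| = |A| + |B| holds if and only if either exactly one of A, B is a single point and the other has positive measure, or both A and B are intervals of positive measure. -/
open MeasureTheory Pointwise Set

/-! Translating so that `sSup X + sInf Y` is the only common point of `X + sInf Y` and
`sSup X + Y` gives `|X| + |Y| ≤ |X + Y|` for nonempty compact `X`, `Y`. If `A` is not an
interval, it has a gap `(l, u)` splitting it into `A₁ ≤ l` and `A₂ ≥ u`. For every window
`W = [β, β + (u - l)]`, the sets `A₁ + (B ∩ (-∞, β + u - l])` and `A₂ + (B ∩ [β, ∞))` meet in at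
most the point `u + β`, so the inequality applied to both gives `|A| + |B| + |B ∩ W| ≤ |A + B|`.
Equality therefore makes every window, hence `B`, null. So in the equality case each set is an
interval as soon as the other one has positive measure, and a null interval is a point. -/

theorem measure_union_of_subset_Iic_of_subset_Ici {α : Type*} [LinearOrder α]
    [MeasurableSpace α] {μ : Measure α} [NullSingletonClass μ]
    {s t : Set α} {a : α} (hs : s ⊆ Iic a) (ht : t ⊆ Ici a) (htm : NullMeasurableSet t μ) :
    μ (s ∪ t) = μ s + μ t := by
  refine measure_union₀ htm (measure_mono_null (t := {a}) ?_ (measure_singleton a))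
  rintro x ⟨hxs, hxt⟩
  exact le_antisymm (hs hxs) (ht hxt)

theorem measure_eq_zero_of_forall_measure_inter_Icc_eq_zero {α : Type*} [AddCommGroup α]
    [LinearOrder α] [IsOrderedAddMonoid α] [Archimedean α] [MeasurableSpace α] {μ : Measure α}
    {s : Set α} {g : α} (hg : 0 < g) (h : ∀ a, μ (s ∩ Icc a (a + g)) = 0) : μ s = 0 := by
  have hcover : s = ⋃ n : ℤ, s ∩ Icc (n • g) ((n + 1) • g) := by
    rw [← inter_iUnion, iUnion_Icc_zsmul hg, inter_univ]
  rw [hcover]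
  refine measure_iUnion_null fun n => ?_
  simpa only [add_smul, one_smul] using h (n • g)

theorem volume_add_volume_le_volume_add {X Y : Set ℝ} (hX : IsCompact X) (hY : IsCompact Y)
    (hXne : X.Nonempty) (hYne : Y.Nonempty) : volume X + volume Y ≤ volume (X + Y) := by
  set x := sSup X
  set y := sInf Y
  have hleft : X + {y} ⊆ Iic (x + y) := by
    rintro _ ⟨a, ha, _, rfl, rfl⟩
    exact add_le_add_left (le_csSup hX.bddAbove ha) y
  have hright : {x} + Y ⊆ Ici (x + y) := by
    rintro _ ⟨_, rfl, b, hb, rfl⟩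
    exact add_le_add_right (csInf_le hY.bddBelow hb) x
  calc volume X + volume Y = volume (X + {y}) + volume ({x} + Y) := by
        simp [add_singleton, singleton_add]
    _ = volume (X + {y} ∪ ({x} + Y)) :=
        (measure_union_of_subset_Iic_of_subset_Ici hleft hright
          (isCompact_singleton.add hY).isClosed.measurableSet.nullMeasurableSet).symm
    _ ≤ volume (X + Y) := measure_mono <| union_subset
        (add_subset_add_left (singleton_subset_iff.2 (hY.sInf_mem hYne)))
        (add_subset_add_right (singleton_subset_iff.2 (hX.sSup_mem hXne)))

theorem volume_add_volume_inter_Icc_le {A₁ A₂ B : Set ℝ} (hA₁ : IsCompact A₁)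
    (hA₂ : IsCompact A₂) (hB : IsCompact B) (hA₁ne : A₁.Nonempty) (hA₂ne : A₂.Nonempty)
    (hBne : B.Nonempty) {l u : ℝ} (hlu : l ≤ u) (hA₁l : A₁ ⊆ Iic l) (hA₂u : A₂ ⊆ Ici u)
    (β : ℝ) :
    volume (A₁ ∪ A₂) + volume B + volume (B ∩ Icc β (β + (u - l))) ≤
      volume ((A₁ ∪ A₂) + B) := by
  have hA : volume (A₁ ∪ A₂) = volume A₁ + volume A₂ :=
    measure_union_of_subset_Iic_of_subset_Ici hA₁l (hA₂u.trans (Ici_subset_Ici.2 hlu))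
      hA₂.isClosed.measurableSet.nullMeasurableSet
  rcases (B ∩ Icc β (β + (u - l))).eq_empty_or_nonempty with hempty | ⟨y, hyB, hy⟩
  · rw [hempty, measure_empty, add_zero]
    exact volume_add_volume_le_volume_add (hA₁.union hA₂) hB (hA₁ne.mono subset_union_left) hBne
  set B₁ := B ∩ Iic (β + (u - l))
  set B₂ := B ∩ Ici β
  have hBsplit : volume B + volume (B ∩ Icc β (β + (u - l))) = volume B₁ + volume B₂ := by
    rw [← measure_union_add_inter B₁ (hB.isClosed.measurableSet.inter measurableSet_Ici),
      ← inter_union_distrib_left, Iic_union_Ici_of_le (hy.1.trans hy.2), inter_univ,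
      inter_inter_inter_comm, inter_self, Iic_inter_Ici]
  have hleft : A₁ + B₁ ⊆ Iic (u + β) := by
    rintro _ ⟨a, ha, b, hb, rfl⟩
    exact mem_Iic.2 (by linarith [mem_Iic.1 (hA₁l ha), mem_Iic.1 hb.2])
  have hright : A₂ + B₂ ⊆ Ici (u + β) := by
    rintro _ ⟨a, ha, b, hb, rfl⟩
    exact mem_Ici.2 (by linarith [mem_Ici.1 (hA₂u ha), mem_Ici.1 hb.2])
  calc volume (A₁ ∪ A₂) + volume B + volume (B ∩ Icc β (β + (u - l)))
      = (volume A₁ + volume B₁) + (volume A₂ + volume B₂) := by rw [add_assoc, hBsplit, hA]; ring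
    _ ≤ volume (A₁ + B₁) + volume (A₂ + B₂) := add_le_add
        (volume_add_volume_le_volume_add hA₁ (hB.inter_right isClosed_Iic) hA₁ne ⟨y, hyB, hy.2⟩)
        (volume_add_volume_le_volume_add hA₂ (hB.inter_right isClosed_Ici) hA₂ne ⟨y, hyB, hy.1⟩)
    _ = volume (A₁ + B₁ ∪ (A₂ + B₂)) := (measure_union_of_subset_Iic_of_subset_Ici hleft hright
        (hA₂.add (hB.inter_right isClosed_Ici)).isClosed.measurableSet.nullMeasurableSet).symm
    _ ≤ volume ((A₁ ∪ A₂) + B) := measure_mono <| union_subset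
        (add_subset_add subset_union_left inter_subset_left)
        (add_subset_add subset_union_right inter_subset_left)

theorem IsCompact.eq_Icc_of_volume_add_le {A B : Set ℝ} (hA : IsCompact A) (hAne : A.Nonempty)
    (hB : IsCompact B) (hBpos : 0 < volume B) (h : volume (A + B) ≤ volume A + volume B) :
    A = Icc (sInf A) (sSup A) := by
  refine eq_Icc_of_connected_compact ⟨hAne, OrdConnected.isPreconnected ?_⟩ hA
  refine ordConnected_def.2 fun c hc d hd x hx => by_contra fun hxA => hBpos.ne' ?_
  obtain ⟨l, u, ⟨hlx, hxu⟩, hgap⟩ :=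
    (mem_nhds_iff_exists_Ioo_subset.1 (hA.isClosed.isOpen_compl.mem_nhds hxA))
  have hsplit : A = A ∩ Iic x ∪ A ∩ Ici x := by
    rw [← inter_union_distrib_left, Iic_union_Ici, inter_univ]
  have hA₁l : A ∩ Iic x ⊆ Iic l := fun y ⟨hyA, hyx⟩ =>
    not_lt.1 fun hly => hgap ⟨hly, (mem_Iic.1 hyx).trans_lt hxu⟩ hyA
  have hA₂u : A ∩ Ici x ⊆ Ici u := fun y ⟨hyA, hxy⟩ =>
    not_lt.1 fun hyu => hgap ⟨hlx.trans_le hxy, hyu⟩ hyA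
  have hfin : volume A + volume B ≠ ⊤ :=
    ENNReal.add_ne_top.2 ⟨hA.measure_lt_top.ne, hB.measure_lt_top.ne⟩
  refine measure_eq_zero_of_forall_measure_inter_Icc_eq_zero (sub_pos.2 (hlx.trans hxu))
    fun β => ?_
  have hwindow := volume_add_volume_inter_Icc_le (hA.inter_right isClosed_Iic)
    (hA.inter_right isClosed_Ici) hB ⟨c, hc, hx.1⟩ ⟨d, hd, hx.2⟩
    (nonempty_of_measure_ne_zero hBpos.ne') (hlx.trans hxu).le hA₁l hA₂u β
  rw [← hsplit] at hwindow
  exact nonpos_iff_eq_zero.1 <| (ENNReal.add_le_add_iff_left hfin).1 <| by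
    rw [add_zero]; exact hwindow.trans h

theorem Real.eq_singleton_of_eq_Icc_of_volume_eq_zero {s : Set ℝ} {a b : ℝ} (hs : s = Icc a b)
    (hne : s.Nonempty) (h : volume s = 0) : s = {a} := by
  subst hs
  rw [Real.volume_Icc, ENNReal.ofReal_eq_zero, sub_nonpos] at h
  rw [le_antisymm h (nonempty_Icc.1 hne), Icc_self]

theorem Real.lt_of_eq_Icc_of_volume_pos {s : Set ℝ} {a b : ℝ} (hs : s = Icc a b)
    (h : 0 < volume s) : a < b := by
  rwa [hs, Real.volume_Icc, ENNReal.ofReal_pos, sub_pos] at h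

theorem bml_one_dim_equality (A B : Set ℝ) (hA : A.Nonempty) (hB : B.Nonempty)
    (hAc : IsCompact A) (hBc : IsCompact B) (hpos : 0 < volume (A + B)) :
    volume (A + B) = volume A + volume B ↔
      ((∃ a, A = {a}) ∧ 0 < volume B) ∨
      ((∃ b, B = {b}) ∧ 0 < volume A) ∨
      ((∃ a b : ℝ, a < b ∧ A = Icc a b) ∧ (∃ c d : ℝ, c < d ∧ B = Icc c d)) := by
  constructor
  · intro heq
    have hAIcc : 0 < volume B → A = Icc (sInf A) (sSup A) := fun hBpos =>
      hAc.eq_Icc_of_volume_add_le hA hBc hBpos heq.le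
    have hBIcc : 0 < volume A → B = Icc (sInf B) (sSup B) := fun hApos =>
      hBc.eq_Icc_of_volume_add_le hB hAc hApos (by rw [add_comm, heq, add_comm])
    rcases eq_zero_or_pos (volume A) with hA0 | hApos
    · have hBpos : 0 < volume B := by rwa [heq, hA0, zero_add] at hpos
      exact Or.inl ⟨⟨_, Real.eq_singleton_of_eq_Icc_of_volume_eq_zero (hAIcc hBpos) hA hA0⟩, hBpos⟩
    rcases eq_zero_or_pos (volume B) with hB0 | hBpos
    · exact Or.inr <| Or.inl
        ⟨⟨_, Real.eq_singleton_of_eq_Icc_of_volume_eq_zero (hBIcc hApos) hB hB0⟩, hApos⟩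
    exact Or.inr <| Or.inr
      ⟨⟨_, _, Real.lt_of_eq_Icc_of_volume_pos (hAIcc hBpos) hApos, hAIcc hBpos⟩,
        ⟨_, _, Real.lt_of_eq_Icc_of_volume_pos (hBIcc hApos) hBpos, hBIcc hApos⟩⟩
  · rintro (⟨⟨a, rfl⟩, -⟩ | ⟨⟨b, rfl⟩, -⟩ | ⟨⟨a, b, hab, rfl⟩, ⟨c, d, hcd, rfl⟩⟩)
    · simp [singleton_add]
    · simp [add_singleton]
    · rw [Icc_add_Icc hab.le hcd.le, Real.volume_Icc, Real.volume_Icc, Real.volume_Icc,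
        ← ENNReal.ofReal_add (by linarith) (by linarith)]
      congr 1
      ring
end

section
/- Let A₁,…,A_m be nonempty compact sets in ℝ and let (𝒢, β) be a fractional partition of [m]. If for every S ∈ 𝒢 the Minkowski sum ∑_{i∈S} A_i is an interval, then ∑_{i∈[m]} A_i is an interval and |∑_{i∈[m]} A_i| = ∑_{S∈𝒢} β(S)·|∑_{i∈S} A_i|. -/
/-!
Write `a i = min (A i)` and `b i = max (A i)`. Every partial sum `∑ i ∈ S, A i` lies in
`[∑ a, ∑ b]` over `S` and contains both endpoints, so a block sum that is an interval is exactly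
that interval. The total sum is closed and contains `∑ a`; at a point `x = ∑ g i` of it below
`∑ b`, some `g i < b i`, and sliding the partial sum over a block `S ∋ i` up its interval shows
that the total sum contains a right neighbourhood of `x`. Continuous induction on `[∑ a, ∑ b]`
then fills the whole interval, and its length `∑ (b i - a i)` regroups along the fractional
partition into the weighted sum of the block lengths.
-/

open MeasureTheory Pointwise Set

/-- `(𝒢, β)` is a fractional partition of `[m]` (indices `Fin m`). -/
def IsFractionalPartition (m : ℕ) (G : Finset (Finset (Fin m)))
    (β : Finset (Fin m) → ℝ) : Prop :=
  (∀ S ∈ G, S.Nonempty) ∧ (∀ S ∈ G, 0 ≤ β S ∧ β S ≤ 1) ∧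
    ∀ i : Fin m, ∑ S ∈ G.filter (fun S => i ∈ S), β S = 1

theorem isCompact_finsetSum {ι M : Type*} [AddCommMonoid M] [TopologicalSpace M]
    [ContinuousAdd M] (s : Finset ι) {A : ι → Set M} (hA : ∀ i ∈ s, IsCompact (A i)) :
    IsCompact (∑ i ∈ s, A i) := by
  classical
  induction s using Finset.induction_on with
  | empty => exact isCompact_singleton
  | insert j s hj ih =>
    rw [Finset.sum_insert hj]
    exact (hA j (s.mem_insert_self j)).add (ih fun i hi => hA i (Finset.mem_insert_of_mem hi))

section OrderedSums

variable {ι M : Type*} [AddCommMonoid M] [PartialOrder M] [IsOrderedAddMonoid M]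
  {s : Finset ι} {A : ι → Set M} {a : ι → M}

theorem isLeast_finsetSum (ha : ∀ i ∈ s, IsLeast (A i) (a i)) :
    IsLeast (∑ i ∈ s, A i) (∑ i ∈ s, a i) := by
  refine ⟨finsetSum_mem_finsetSum s A a fun i hi => (ha i hi).1, fun x hx => ?_⟩
  obtain ⟨g, hg, rfl⟩ := (mem_finsetSum s A x).1 hx
  exact Finset.sum_le_sum fun i hi => (ha i hi).2 (hg hi)

theorem isGreatest_finsetSum (ha : ∀ i ∈ s, IsGreatest (A i) (a i)) :
    IsGreatest (∑ i ∈ s, A i) (∑ i ∈ s, a i) :=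
  isLeast_finsetSum (M := Mᵒᵈ) ha

end OrderedSums

theorem Set.OrdConnected.eq_Icc {α : Type*} [Preorder α] {s : Set α} {a b : α}
    (hs : s.OrdConnected) (ha : IsLeast s a) (hb : IsGreatest s b) : s = Icc a b :=
  Subset.antisymm (fun _ hx => ⟨ha.2 hx, hb.2 hx⟩) (hs.out ha.1 hb.1)

section IntervalSums

open Topology

variable {ι : Type*} [Fintype ι] {A : ι → Set ℝ} {b : ι → ℝ}

theorem finsetSum_mem_nhdsGT (hb : ∀ i, IsGreatest (A i) (b i))
    (hblock : ∀ i, ∃ S : Finset ι, i ∈ S ∧ (∑ j ∈ S, A j).OrdConnected) {x : ℝ}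
    (hx : x ∈ ∑ i, A i) (hxb : x < ∑ i, b i) : ∑ i, A i ∈ 𝓝[>] x := by
  classical
  obtain ⟨g, hg, rfl⟩ := (mem_finsetSum _ A x).1 hx
  obtain ⟨i, -, hgi⟩ := Finset.exists_lt_of_sum_lt hxb
  obtain ⟨S, hiS, hS⟩ := hblock i
  have hgb : ∑ j ∈ S, g j < ∑ j ∈ S, b j :=
    Finset.sum_lt_sum (fun j _ => (hb j).2 (hg (Finset.mem_univ j))) ⟨i, hiS, hgi⟩
  have hIcc : Icc (∑ j ∈ S, g j) (∑ j ∈ S, b j) ⊆ ∑ j ∈ S, A j :=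
    hS.out (finsetSum_mem_finsetSum S A g fun j _ => hg (Finset.mem_univ j))
      (isGreatest_finsetSum fun j _ => hb j).1
  have hrest : ∑ j ∈ Sᶜ, g j ∈ ∑ j ∈ Sᶜ, A j :=
    finsetSum_mem_finsetSum Sᶜ A g fun j _ => hg (Finset.mem_univ j)
  refine Filter.mem_of_superset (Icc_mem_nhdsGT (lt_add_of_pos_right _ (sub_pos.2 hgb)))
    fun y hy => ?_
  have hgsplit := Finset.sum_add_sum_compl S g
  rw [← Finset.sum_add_sum_compl S A, ← sub_add_cancel y (∑ j ∈ Sᶜ, g j)]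
  exact add_mem_add (hIcc ⟨by linarith [hy.1], by linarith [hy.2]⟩) hrest

theorem finsetSum_eq_Icc_of_ordConnected_blocks (hc : ∀ i, IsCompact (A i)) {a : ι → ℝ}
    (ha : ∀ i, IsLeast (A i) (a i)) (hb : ∀ i, IsGreatest (A i) (b i))
    (hblock : ∀ i, ∃ S : Finset ι, i ∈ S ∧ (∑ j ∈ S, A j).OrdConnected) :
    ∑ i, A i = Icc (∑ i, a i) (∑ i, b i) := by
  have hmin := isLeast_finsetSum (s := Finset.univ) fun i _ => ha i
  have hmax := isGreatest_finsetSum (s := Finset.univ) fun i _ => hb i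
  have hclosed := (isCompact_finsetSum Finset.univ fun i _ => hc i).isClosed
  refine Subset.antisymm (fun x hx => ⟨hmin.2 hx, hmax.2 hx⟩) ?_
  exact (hclosed.inter isClosed_Icc).Icc_subset_of_forall_mem_nhdsWithin hmin.1
    fun x hx => finsetSum_mem_nhdsGT hb hblock hx.1 hx.2.2

end IntervalSums

namespace IsFractionalPartition

variable {m : ℕ} {G : Finset (Finset (Fin m))} {β : Finset (Fin m) → ℝ}

theorem exists_mem (h : IsFractionalPartition m G β) (i : Fin m) : ∃ S ∈ G, i ∈ S := by
  by_contra! hi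
  simpa [Finset.filter_false_of_mem hi] using h.2.2 i

theorem sum_eq_sum_mul_sum (h : IsFractionalPartition m G β) (f : Fin m → ℝ) :
    ∑ i, f i = ∑ S ∈ G, β S * ∑ i ∈ S, f i := by
  calc ∑ i, f i = ∑ i, ∑ S ∈ G with i ∈ S, β S * f i := by
        simp only [← Finset.sum_mul, h.2.2, one_mul]
    _ = ∑ S ∈ G, ∑ i ∈ S, β S * f i := Finset.sum_comm' fun _ _ => by simp [and_comm]
    _ = ∑ S ∈ G, β S * ∑ i ∈ S, f i := by simp only [Finset.mul_sum]

end IsFractionalPartition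

theorem fractional_equality_of_intervals (m : ℕ) (A : Fin m → Set ℝ)
    (hne : ∀ i, (A i).Nonempty) (hc : ∀ i, IsCompact (A i))
    (G : Finset (Finset (Fin m))) (β : Finset (Fin m) → ℝ)
    (hfp : IsFractionalPartition m G β)
    (hint : ∀ S ∈ G, ∃ a b : ℝ, a ≤ b ∧ (∑ i ∈ S, A i) = Icc a b) :
    (∃ a b : ℝ, a ≤ b ∧ (∑ i : Fin m, A i) = Icc a b) ∧
      (volume (∑ i : Fin m, A i)).toReal =
        ∑ S ∈ G, β S * (volume (∑ i ∈ S, A i)).toReal := by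
  have ha i : IsLeast (A i) (sInf (A i)) := (hc i).isLeast_sInf (hne i)
  have hb i : IsGreatest (A i) (sSup (A i)) := (hc i).isGreatest_sSup (hne i)
  have hab i : sInf (A i) ≤ sSup (A i) := (ha i).2 (hb i).1
  have hblocks : ∀ S ∈ G, ∑ i ∈ S, A i = Icc (∑ i ∈ S, sInf (A i)) (∑ i ∈ S, sSup (A i)) := by
    intro S hS
    obtain ⟨c, d, -, hS_eq⟩ := hint S hS
    exact (hS_eq ▸ ordConnected_Icc).eq_Icc (isLeast_finsetSum fun i _ => ha i)
      (isGreatest_finsetSum fun i _ => hb i)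
  have htotal := finsetSum_eq_Icc_of_ordConnected_blocks hc ha hb fun i =>
    let ⟨S, hSG, hiS⟩ := hfp.exists_mem i
    ⟨S, hiS, hblocks S hSG ▸ ordConnected_Icc⟩
  have hvol (s : Finset (Fin m)) :
      (volume (Icc (∑ i ∈ s, sInf (A i)) (∑ i ∈ s, sSup (A i)))).toReal =
        ∑ i ∈ s, (sSup (A i) - sInf (A i)) := by
    rw [← measureReal_def, Real.volume_real_Icc_of_le (Finset.sum_le_sum fun i _ => hab i),
      Finset.sum_sub_distrib]
  refine ⟨⟨_, _, Finset.sum_le_sum fun i _ => hab i, htotal⟩, ?_⟩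
  rw [htotal, hvol, hfp.sum_eq_sum_mul_sum]
  exact Finset.sum_congr rfl fun S hS => by rw [hblocks S hS, hvol]
end

section
/- Let m ≥ 3 and let (𝒢, β) be a nontrivial fractional partition of [m] (i.e., [m] ∉ 𝒢). Fix k with 1 < k < m, let 𝒢* := {S ∩ [k] : S ∈ 𝒢, S ∩ [k] ∉ {∅, [k]}}, let γ := ∑_{S∈𝒢 : S∩[k]=[k]} β(S), and assume γ < 1. Define β*(T) := (1/(1−γ)) ∑_{S∈𝒢 : S∩[k]=T} β(S). Then (𝒢*, β*) is a fractional partition of [k], i.e., for every i ∈ [k], ∑_{T∈𝒢*, i∈T} β*(T) = 1; moreover it is nontrivial ([k] ∉ 𝒢*). -/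
open Finset

/-- `(𝒢, β)` is a fractional partition of the index set `I ⊆ ℕ`. -/
def IsFracPartOn (I : Finset ℕ) (G : Finset (Finset ℕ)) (β : Finset ℕ → ℝ) : Prop :=
  (∀ S ∈ G, S.Nonempty ∧ S ⊆ I) ∧ (∀ S ∈ G, 0 ≤ β S) ∧
    ∀ i ∈ I, ∑ S ∈ G.filter (fun S => i ∈ S), β S = 1

theorem restricted_fractional_partition (m k : ℕ) (hm : 3 ≤ m) (hk1 : 1 < k) (hkm : k < m)
    (G : Finset (Finset ℕ)) (β : Finset ℕ → ℝ)
    (hfp : IsFracPartOn (range m) G β)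
    (hpos : ∀ S ∈ G, 0 < β S)
    (hnontriv : range m ∉ G)
    (γ : ℝ) (hγ : γ = ∑ S ∈ G.filter (fun S => S ∩ range k = range k), β S)
    (hγ1 : γ < 1)
    (Gstar : Finset (Finset ℕ))
    (hGstar : Gstar = (G.image (fun S => S ∩ range k)).filter
      (fun T => T ≠ ∅ ∧ T ≠ range k))
    (βstar : Finset ℕ → ℝ)
    (hβstar : ∀ T, βstar T = (1 / (1 - γ)) * ∑ S ∈ G.filter (fun S => S ∩ range k = T), β S) :
    IsFracPartOn (range k) Gstar βstar ∧ range k ∉ Gstar := by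
  obtain ⟨hG1, hG2, hG3⟩ := hfp
  have h1γ : (0:ℝ) < 1 - γ := by linarith
  constructor
  · refine ⟨?_, ?_, ?_⟩
    · intro T hT
      rw [hGstar, mem_filter, mem_image] at hT
      obtain ⟨⟨S, hS, rfl⟩, hne, hnk⟩ := hT
      exact ⟨nonempty_iff_ne_empty.2 hne, inter_subset_right⟩
    · intro T hT
      rw [hβstar]
      apply mul_nonneg (by positivity)
      exact Finset.sum_nonneg fun S hS => hG2 S (mem_filter.1 hS).1
    · intro i hi
      have him : i ∈ range m := mem_range.2 (lt_trans (mem_range.1 hi) hkm)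
      set A := G.filter (fun S => i ∈ S ∧ ¬ S ∩ range k = range k) with hA
      have hmaps : ∀ S ∈ A, S ∩ range k ∈ Gstar.filter (fun T => i ∈ T) := by
        intro S hS
        rw [hA, mem_filter] at hS
        obtain ⟨hSG, hiS, hSk⟩ := hS
        have hiT : i ∈ S ∩ range k := mem_inter.2 ⟨hiS, hi⟩
        rw [mem_filter, hGstar, mem_filter, mem_image]
        exact ⟨⟨⟨S, hSG, rfl⟩, ne_empty_of_mem hiT, hSk⟩, hiT⟩
      have key : ∑ T ∈ Gstar.filter (fun T => i ∈ T),
          ∑ S ∈ A.filter (fun S => S ∩ range k = T), β S = ∑ S ∈ A, β S :=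
        Finset.sum_fiberwise_of_maps_to hmaps β
      have hfib : ∀ T ∈ Gstar.filter (fun T => i ∈ T),
          A.filter (fun S => S ∩ range k = T) = G.filter (fun S => S ∩ range k = T) := by
        intro T hT
        rw [mem_filter, hGstar, mem_filter] at hT
        obtain ⟨⟨hTim, hne, hnk⟩, hiT⟩ := hT
        ext S
        simp only [hA, mem_filter, and_assoc]
        constructor
        · rintro ⟨h1, h2, h3, h4⟩; exact ⟨h1, h4⟩
        · rintro ⟨h1, h2⟩
          refine ⟨h1, ?_, ?_, h2⟩
          · have : i ∈ S ∩ range k := h2 ▸ hiT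
            exact (mem_inter.1 this).1
          · rw [h2]; exact hnk
      have hsumA : ∑ S ∈ A, β S = 1 - γ := by
        have hsplit := Finset.sum_filter_add_sum_filter_not (G.filter (fun S => i ∈ S))
          (fun S => S ∩ range k = range k) β
        have h3 := hG3 i him
        have e1 : (G.filter (fun S => i ∈ S)).filter (fun S => S ∩ range k = range k)
            = G.filter (fun S => S ∩ range k = range k) := by
          ext S
          simp only [mem_filter, and_assoc]
          constructor
          · rintro ⟨h1, _, h2⟩; exact ⟨h1, h2⟩
          · rintro ⟨h1, h2⟩
            refine ⟨h1, ?_, h2⟩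
            have : i ∈ S ∩ range k := by rw [h2]; exact hi
            exact (mem_inter.1 this).1
        have e2 : (G.filter (fun S => i ∈ S)).filter (fun S => ¬ S ∩ range k = range k) = A := by
          rw [hA, filter_filter]
        rw [e1, e2, ← hγ, h3] at hsplit
        linarith
      calc ∑ T ∈ Gstar.filter (fun T => i ∈ T), βstar T
          = ∑ T ∈ Gstar.filter (fun T => i ∈ T),
            (1 / (1 - γ)) * ∑ S ∈ G.filter (fun S => S ∩ range k = T), β S :=
            Finset.sum_congr rfl fun T _ => hβstar T
        _ = (1 / (1 - γ)) * ∑ T ∈ Gstar.filter (fun T => i ∈ T),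
            ∑ S ∈ G.filter (fun S => S ∩ range k = T), β S := by rw [Finset.mul_sum]
        _ = (1 / (1 - γ)) * ∑ T ∈ Gstar.filter (fun T => i ∈ T),
            ∑ S ∈ A.filter (fun S => S ∩ range k = T), β S := by
            exact congrArg _ (Finset.sum_congr rfl fun T hT => by rw [hfib T hT])
        _ = 1 := by rw [key, hsumA]; field_simp
  · intro h
    rw [hGstar, mem_filter] at h
    exact h.2.2 rfl
end

section
/- Let m ≥ 3, let (𝒢, β) be a fractional partition of [m], and let A₁,…,A_m be compact sets in ℝⁿ such that for every S ∈ 𝒢 the Minkowski sum ∑_{i∈S} A_i is convex. Then ∑_{i∈[m]} A_i is convex. -/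
/-! Since convex hulls commute with Minkowski sums, `∑ i ∈ S, A i` is convex exactly when
`∑ i ∈ S, conv (A i) ⊆ ∑ i ∈ S, A i`. This inclusion passes from `S` and `T` to `S ∪ T`: replace
the hulls over `S` by the sets themselves, enlarge the overlap `S ∩ T` back to hulls, and then use
the inclusion for `T`. As the sets of a fractional partition cover `[m]`, induction over them
reaches the full sum. -/

open MeasureTheory Pointwise

open Finset

section

variable {𝕜 E ι : Type*} [Field 𝕜] [LinearOrder 𝕜] [IsStrictOrderedRing 𝕜]
  [AddCommGroup E] [Module 𝕜 E]

theorem convex_sum_iff_sum_convexHull_subset (s : Finset ι) (A : ι → Set E) :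
    Convex 𝕜 (∑ i ∈ s, A i) ↔ ∑ i ∈ s, convexHull 𝕜 (A i) ⊆ ∑ i ∈ s, A i := by
  rw [← convexHull_sum, ← convexHull_eq_self]
  exact ⟨Eq.subset, fun h => h.antisymm (subset_convexHull 𝕜 _)⟩

theorem Convex.sum_union [DecidableEq ι] {s t : Finset ι} {A : ι → Set E}
    (hs : Convex 𝕜 (∑ i ∈ s, A i)) (ht : Convex 𝕜 (∑ i ∈ t, A i)) :
    Convex 𝕜 (∑ i ∈ s ∪ t, A i) := by
  rw [convex_sum_iff_sum_convexHull_subset] at hs ht ⊢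
  calc ∑ i ∈ s ∪ t, convexHull 𝕜 (A i)
      = ∑ i ∈ s, convexHull 𝕜 (A i) + ∑ i ∈ t \ s, convexHull 𝕜 (A i) := by
        rw [← Finset.sum_union disjoint_sdiff, union_sdiff_self_eq_union]
    _ ⊆ ∑ i ∈ s ∩ t, A i + ∑ i ∈ s \ t, A i + ∑ i ∈ t \ s, convexHull 𝕜 (A i) := by
        rw [sum_inter_add_sum_sdiff]
        exact Set.add_subset_add hs subset_rfl
    _ ⊆ ∑ i ∈ s ∩ t, convexHull 𝕜 (A i) + ∑ i ∈ s \ t, A i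
          + ∑ i ∈ t \ s, convexHull 𝕜 (A i) := by
        refine Set.add_subset_add (Set.add_subset_add ?_ subset_rfl) subset_rfl
        exact Set.finsetSum_subset_finsetSum _ _ _ fun i _ => subset_convexHull 𝕜 (A i)
    _ = ∑ i ∈ s \ t, A i + ∑ i ∈ t, convexHull 𝕜 (A i) := by
        rw [← sum_inter_add_sum_sdiff t s, inter_comm]
        abel
    _ ⊆ ∑ i ∈ s \ t, A i + ∑ i ∈ t, A i := Set.add_subset_add subset_rfl ht
    _ = ∑ i ∈ s ∪ t, A i := by
        rw [← Finset.sum_union sdiff_disjoint, sdiff_union_self_eq_union]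

theorem convex_sum_sup_id [DecidableEq ι] {G : Finset (Finset ι)} {A : ι → Set E}
    (hG : ∀ S ∈ G, Convex 𝕜 (∑ i ∈ S, A i)) : Convex 𝕜 (∑ i ∈ G.sup id, A i) :=
  sup_induction (p := fun u => Convex 𝕜 (∑ i ∈ u, A i)) (by simpa using convex_zero)
    (fun _ hs _ ht => hs.sum_union ht) hG

end

theorem IsFractionalPartition.sup_id_eq_univ {m : ℕ} {G : Finset (Finset (Fin m))}
    {β : Finset (Fin m) → ℝ} (hfp : IsFractionalPartition m G β) : G.sup id = univ := by
  refine eq_univ_of_forall fun i => ?_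
  obtain ⟨S, hS⟩ := nonempty_of_sum_ne_zero (hfp.2.2 i ▸ one_ne_zero)
  rw [mem_filter] at hS
  exact le_sup (f := id) hS.1 hS.2

theorem convex_total_sum_of_convex_partial_sums_general (m n : ℕ)
    (A : Fin m → Set (EuclideanSpace ℝ (Fin n)))
    (G : Finset (Finset (Fin m))) (β : Finset (Fin m) → ℝ)
    (hfp : IsFractionalPartition m G β)
    (hconv : ∀ S ∈ G, Convex ℝ (∑ i ∈ S, A i)) :
    Convex ℝ (∑ i : Fin m, A i) := by
  rw [← hfp.sup_id_eq_univ]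
  exact convex_sum_sup_id hconv

theorem convex_total_sum_of_convex_partial_sums (m n : ℕ) (hm : 3 ≤ m)
    (A : Fin m → Set (EuclideanSpace ℝ (Fin n)))
    (hc : ∀ i, IsCompact (A i))
    (G : Finset (Finset (Fin m))) (β : Finset (Fin m) → ℝ)
    (hfp : IsFractionalPartition m G β)
    (hconv : ∀ S ∈ G, Convex ℝ (∑ i ∈ S, A i)) :
    Convex ℝ (∑ i : Fin m, A i) :=
  convex_total_sum_of_convex_partial_sums_general m n A G β hfp hconv
end

section
/- For compact sets A₁,…,A_m in ℝⁿ and subsets S, T ⊆ [m], the Schneider non-convexity index satisfies c(∑_{i∈S∪T} A_i) ≤ max(c(∑_{i∈S} A_i), c(∑_{i∈T} A_i)). -/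
/-!
Split the index sets into `S \ T`, `S ∩ T`, `T \ S` with Minkowski sums `U`, `V`, `W`. For
`λ ≥ 0`, `X + λ conv X` is convex iff it equals `(1 + λ) conv X`. That identity for `U + V` and
for `V + W`, together with `V + λ conv V ⊆ (1 + λ) conv V`, gives it for `U + V + W`; since the
admissible `λ` form an up-set, the maximum of admissible values for `U + V` and `V + W` is
admissible for `U + V + W`. Carathéodory's theorem makes `λ = n` admissible for every set, so the
infima are never taken over the empty set (where `sInf` would be the junk value `0`).
-/

open Pointwise

/-- The Schneider non-convexity index of a set `A ⊆ ℝⁿ`. -/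
noncomputable def schneiderIndex {n : ℕ} (A : Set (EuclideanSpace ℝ (Fin n))) : ℝ :=
  sInf {lam : ℝ | 0 ≤ lam ∧ Convex ℝ (A + lam • convexHull ℝ A)}

open Finset Module

theorem csInf_le_max_csInf {B C D : Set ℝ} (hB : B.Nonempty) (hC : C.Nonempty)
    (hD : BddBelow D) (h : ∀ b ∈ B, ∀ c ∈ C, max b c ∈ D) :
    sInf D ≤ max (sInf B) (sInf C) := by
  refine le_of_forall_pos_le_add fun ε hε => ?_
  obtain ⟨b, hb, hbε⟩ := Real.lt_sInf_add_pos hB hε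
  obtain ⟨c, hc, hcε⟩ := Real.lt_sInf_add_pos hC hε
  calc sInf D ≤ max b c := csInf_le hD (h b hb c hc)
    _ ≤ max (sInf B + ε) (sInf C + ε) := max_le_max hbε.le hcε.le
    _ = max (sInf B) (sInf C) + ε := max_add_add_right _ _ _

section ConvexHull

variable {E : Type*} [AddCommGroup E] [Module ℝ E] {A : Set E} {lam : ℝ}

theorem smul_convexHull_eq_convexHull_add_smul (hlam : 0 ≤ lam) :
    (1 + lam) • convexHull ℝ A = convexHull ℝ A + lam • convexHull ℝ A := by
  rw [(convex_convexHull ℝ A).add_smul zero_le_one hlam, one_smul]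

theorem add_smul_convexHull_subset (hlam : 0 ≤ lam) :
    A + lam • convexHull ℝ A ⊆ (1 + lam) • convexHull ℝ A := by
  rw [smul_convexHull_eq_convexHull_add_smul hlam]
  exact Set.add_subset_add_right (subset_convexHull ℝ A)

/-- `conv (A + λ • conv A) = (1 + λ) • conv A`. -/
theorem convex_add_smul_convexHull_iff (hlam : 0 ≤ lam) :
    Convex ℝ (A + lam • convexHull ℝ A) ↔
      A + lam • convexHull ℝ A = (1 + lam) • convexHull ℝ A := by
  refine ⟨fun h => ?_, fun h => h ▸ (convex_convexHull ℝ A).smul _⟩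
  rw [← h.convexHull_eq, convexHull_add, convexHull_smul, (convex_convexHull ℝ A).convexHull_eq,
    smul_convexHull_eq_convexHull_add_smul hlam]

theorem Convex.add_smul_convexHull_of_le {mu : ℝ} (h : Convex ℝ (A + lam • convexHull ℝ A))
    (hlam : 0 ≤ lam) (hle : lam ≤ mu) : Convex ℝ (A + mu • convexHull ℝ A) := by
  have hsplit : mu • convexHull ℝ A = lam • convexHull ℝ A + (mu - lam) • convexHull ℝ A := by
    rw [← (convex_convexHull ℝ A).add_smul hlam (sub_nonneg.2 hle), add_sub_cancel]
  rw [hsplit, ← add_assoc]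
  exact h.add ((convex_convexHull ℝ A).smul _)

theorem convex_add_add_add_smul_convexHull {U V W : Set E} (hlam : 0 ≤ lam)
    (hUV : Convex ℝ (U + V + lam • convexHull ℝ (U + V)))
    (hVW : Convex ℝ (V + W + lam • convexHull ℝ (V + W))) :
    Convex ℝ (U + V + W + lam • convexHull ℝ (U + V + W)) := by
  rw [convex_add_smul_convexHull_iff hlam] at hUV hVW ⊢
  refine (add_smul_convexHull_subset hlam).antisymm ?_
  calc (1 + lam) • convexHull ℝ (U + V + W)
      = (U + V + lam • convexHull ℝ (U + V)) + (1 + lam) • convexHull ℝ W := by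
        rw [hUV, convexHull_add (U + V), smul_add]
    _ = U + lam • convexHull ℝ U + (V + lam • convexHull ℝ V) + (1 + lam) • convexHull ℝ W := by
        simp only [convexHull_add, smul_add]; abel
    _ ⊆ U + lam • convexHull ℝ U + (1 + lam) • convexHull ℝ V + (1 + lam) • convexHull ℝ W := by
        gcongr
        exact add_smul_convexHull_subset hlam
    _ = U + lam • convexHull ℝ U + (V + W + lam • convexHull ℝ (V + W)) := by
        rw [hVW, convexHull_add V, smul_add, add_assoc]
    _ = U + V + W + lam • convexHull ℝ (U + V + W) := by
        simp only [convexHull_add, smul_add]; abel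

theorem Finset.sum_smul_mem_sum_smul_convexHull {ι : Type*} {s : Finset ι} {w : ι → ℝ}
    {z : ι → E} (hs : s.Nonempty) (hw : ∀ i ∈ s, 0 ≤ w i) (hz : ∀ i ∈ s, z i ∈ A) :
    ∑ i ∈ s, w i • z i ∈ (∑ i ∈ s, w i) • convexHull ℝ A := by
  rcases (sum_nonneg hw).eq_or_lt with hzero | hpos
  · obtain ⟨i, hi⟩ := hs
    have hw0 := (sum_eq_zero_iff_of_nonneg hw).1 hzero.symm
    rw [← hzero, Set.zero_smul_set ⟨z i, subset_convexHull ℝ A (hz i hi)⟩,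
      sum_eq_zero fun j hj => by rw [hw0 j hj, zero_smul]]
    exact Set.zero_mem_zero
  · have hcm : ∑ i ∈ s, w i • z i = (∑ i ∈ s, w i) • s.centerMass w z := by
      rw [centerMass, smul_smul, mul_inv_cancel₀ hpos.ne', one_smul]
    rw [hcm]
    exact Set.smul_mem_smul_set (s.centerMass_mem_convexHull hw hpos hz)

/-- By Carathéodory, `x ∈ conv A` is a convex combination of at most `finrank E + 1` points of
`A`, so some point `z` has weight at least `1 / (finrank E + 1)`; removing it leaves
`(finrank E + 1) • x - z` as a nonnegative combination with total weight `finrank E`. -/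
theorem smul_convexHull_subset_add_finrank_smul_convexHull [FiniteDimensional ℝ E] (A : Set E) :
    ((finrank ℝ E : ℝ) + 1) • convexHull ℝ A ⊆ A + (finrank ℝ E : ℝ) • convexHull ℝ A := by
  classical
  rintro _ ⟨x, hx, rfl⟩
  obtain ⟨ι, _, z, w, hzA, hind, hwpos, hw1, rfl⟩ := eq_pos_convex_span_of_mem_convexHull hx
  have hcard : (Fintype.card ι : ℝ) ≤ finrank ℝ E + 1 := by
    have : Fintype.card ι ≤ finrank ℝ E + 1 :=
      hind.card_le_finrank_succ.trans (Nat.succ_le_succ (Submodule.finrank_le _))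
    exact_mod_cast this
  set n : ℝ := (finrank ℝ E : ℝ)
  obtain ⟨i₀, -, hi₀⟩ := exists_le_of_sum_le (nonempty_of_sum_ne_zero (hw1 ▸ one_ne_zero))
    (f := fun _ => (1 : ℝ)) (g := fun i => (n + 1) * w i)
    (by simpa [← mul_sum, hw1] using hcard)
  set w' : ι → ℝ := fun i => (n + 1) * w i - (Pi.single i₀ 1 : ι → ℝ) i
  have hw' : ∀ i ∈ univ, 0 ≤ w' i := by
    intro i _
    rcases eq_or_ne i i₀ with rfl | hi
    · simpa [w'] using hi₀
    · simpa [w', hi] using mul_nonneg (by positivity) (hwpos i).le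
  have hw'sum : ∑ i, w' i = n := by simp [w', sum_sub_distrib, ← mul_sum, hw1]
  have hw'z : ∑ i, w' i • z i = (n + 1) • ∑ i, w i • z i - z i₀ := by
    simp [w', sub_smul, sum_sub_distrib, smul_sum, mul_smul, Pi.single_apply]
  have hmem := sum_smul_mem_sum_smul_convexHull (univ_nonempty_iff.2 ⟨i₀⟩) hw'
    (fun i _ => hzA ⟨i, rfl⟩)
  rw [hw'sum, hw'z] at hmem
  exact ⟨z i₀, hzA ⟨i₀, rfl⟩, _, hmem, add_sub_cancel _ _⟩

theorem convex_add_finrank_smul_convexHull [FiniteDimensional ℝ E] (A : Set E) :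
    Convex ℝ (A + (finrank ℝ E : ℝ) • convexHull ℝ A) := by
  refine (convex_add_smul_convexHull_iff (Nat.cast_nonneg _)).2
    ((add_smul_convexHull_subset (Nat.cast_nonneg _)).antisymm ?_)
  rw [add_comm (1 : ℝ)]
  exact smul_convexHull_subset_add_finrank_smul_convexHull A

end ConvexHull

theorem schneiderIndex_add_add_le {n : ℕ} (U V W : Set (EuclideanSpace ℝ (Fin n))) :
    schneiderIndex (U + V + W) ≤ max (schneiderIndex (U + V)) (schneiderIndex (V + W)) := by
  have hdim (B : Set (EuclideanSpace ℝ (Fin n))) :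
      (n : ℝ) ∈ {lam : ℝ | 0 ≤ lam ∧ Convex ℝ (B + lam • convexHull ℝ B)} :=
    ⟨n.cast_nonneg, by simpa using convex_add_finrank_smul_convexHull B⟩
  refine csInf_le_max_csInf ⟨n, hdim _⟩ ⟨n, hdim _⟩ ⟨0, fun _ h => h.1⟩ ?_
  rintro lam ⟨hlam, hUV⟩ mu ⟨hmu, hVW⟩
  have hmax : 0 ≤ max lam mu := le_max_of_le_left hlam
  exact ⟨hmax, convex_add_add_add_smul_convexHull hmax
    (hUV.add_smul_convexHull_of_le hlam (le_max_left _ _))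
    (hVW.add_smul_convexHull_of_le hmu (le_max_right _ _))⟩

theorem schneiderIndex_union_le_general {n m : ℕ} (A : Fin m → Set (EuclideanSpace ℝ (Fin n)))
    (S T : Finset (Fin m)) :
    schneiderIndex (∑ i ∈ S ∪ T, A i) ≤
      max (schneiderIndex (∑ i ∈ S, A i)) (schneiderIndex (∑ i ∈ T, A i)) := by
  classical
  have hS : ∑ i ∈ S, A i = ∑ i ∈ S \ T, A i + ∑ i ∈ S ∩ T, A i := by
    rw [add_comm, sum_inter_add_sum_sdiff]
  have hT : ∑ i ∈ T, A i = ∑ i ∈ S ∩ T, A i + ∑ i ∈ T \ S, A i := by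
    rw [inter_comm, sum_inter_add_sum_sdiff]
  have hST : ∑ i ∈ S ∪ T, A i = ∑ i ∈ S \ T, A i + ∑ i ∈ S ∩ T, A i + ∑ i ∈ T \ S, A i := by
    rw [add_assoc, ← hT, ← union_sdiff_right, sum_sdiff subset_union_right]
  rw [hS, hT, hST]
  exact schneiderIndex_add_add_le _ _ _

theorem schneiderIndex_union_le {n m : ℕ} (A : Fin m → Set (EuclideanSpace ℝ (Fin n)))
    (hc : ∀ i, IsCompact (A i)) (S T : Finset (Fin m)) :
    schneiderIndex (∑ i ∈ S ∪ T, A i) ≤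
      max (schneiderIndex (∑ i ∈ S, A i)) (schneiderIndex (∑ i ∈ T, A i)) :=
  schneiderIndex_union_le_general A S T
end

section
/- Let m ≥ 3 and let A₁,…,A_m be nonempty compact subsets of ℝ. Suppose q ≥ 1 is an integer and S₁,…,S_s are nonempty subsets of [m] (possibly with repetition) such that each i ∈ [m] belongs to exactly q of the sets S_j. Then q·|∑_{i∈[m]} A_i| ≥ ∑_{j=1}^{s} |∑_{i∈S_j} A_i|. -/
open MeasureTheory Pointwise Finset ENNReal

/-!
Let `μ i` and `β i` be the minimum and maximum of `A i`, and order the indices. Raising the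
summands from their minima to their maxima one index at a time cuts `(∑ μ, ∑ β]` into
consecutive steps, the `i`-th of length `β i - μ i`. For a subfamily `S`, the part of
`∑_{i ∈ S} A i` in its own `i`-th step, translated by the matching staircase point of the
complementary summands, lands in the part of `∑ A` in the `i`-th step of the full family. Hence
`|∑_{i ∈ S} A i| ≤ ∑_{i ∈ S} |∑ A ∩ step i|`; summing over the `S_j` counts each `i` exactly `q`
times, and the full steps are disjoint.
-/

section Staircase

variable {ι : Type*} [LinearOrder ι] (μ β : ι → ℝ)

def staircaseLower (s : Finset ι) (i : ι) : ℝ := ∑ k ∈ s, if k < i then β k else μ k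

def staircaseUpper (s : Finset ι) (i : ι) : ℝ := ∑ k ∈ s, if k ≤ i then β k else μ k

def staircaseStep (s : Finset ι) (i : ι) : Set ℝ :=
  Set.Ioc (staircaseLower μ β s i) (staircaseUpper μ β s i)

variable {μ β}

theorem staircaseUpper_eq_staircaseLower_of_notMem {s : Finset ι} {i : ι} (hi : i ∉ s) :
    staircaseUpper μ β s i = staircaseLower μ β s i :=
  sum_congr rfl fun k hk => by
    rw [if_congr (ne_of_mem_of_not_mem hk hi).le_iff_lt rfl rfl]

theorem staircaseUpper_le_staircaseLower {s : Finset ι} (hμβ : ∀ k ∈ s, μ k ≤ β k) {i j : ι}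
    (hij : i < j) : staircaseUpper μ β s i ≤ staircaseLower μ β s j := by
  refine sum_le_sum fun k hk => ?_
  by_cases hki : k ≤ i
  · simp [hki, hki.trans_lt hij]
  · split_ifs <;> simp [hμβ k hk]

open Function in
theorem pairwiseDisjoint_staircaseStep {s : Finset ι} (hμβ : ∀ k ∈ s, μ k ≤ β k) :
    Pairwise (Disjoint on (staircaseStep μ β s)) :=
  (pairwise_disjoint_on _).2 fun _ _ hij =>
    Set.Ioc_disjoint_Ioc_of_le (staircaseUpper_le_staircaseLower hμβ hij)

theorem vadd_staircaseStep {s t : Finset ι} (hst : Disjoint s t) {i : ι} (hi : i ∉ t) :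
    staircaseLower μ β t i +ᵥ staircaseStep μ β s i = staircaseStep μ β (s ∪ t) i := by
  have hlower : staircaseLower μ β (s ∪ t) i = staircaseLower μ β t i + staircaseLower μ β s i :=
    (sum_union hst).trans (add_comm _ _)
  have hupper :
      staircaseUpper μ β (s ∪ t) i = staircaseLower μ β t i + staircaseUpper μ β s i := by
    rw [← staircaseUpper_eq_staircaseLower_of_notMem hi]
    exact (sum_union hst).trans (add_comm _ _)
  rw [staircaseStep, staircaseStep, ← Set.image_vadd, hlower, hupper]
  exact Set.image_const_add_Ioc _ _ _

theorem Ioc_sum_subset_biUnion_staircaseStep (s : Finset ι) :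
    Set.Ioc (∑ k ∈ s, μ k) (∑ k ∈ s, β k) ⊆ ⋃ i ∈ s, staircaseStep μ β s i := by
  induction s using Finset.induction_on_max with
  | empty => simp
  | insert a t hta ih =>
    have ha : a ∉ t := fun h => (hta a h).false
    intro x ⟨hx₁, hx₂⟩
    rw [sum_insert ha] at hx₁ hx₂
    by_cases hx : x ≤ μ a + ∑ k ∈ t, β k
    · obtain ⟨i, hi, hxi⟩ : ∃ i ∈ t, x - μ a ∈ staircaseStep μ β t i := by
        simpa using ih ⟨by linarith, by linarith⟩
      have hshift : μ a +ᵥ staircaseStep μ β t i = staircaseStep μ β (insert a t) i := by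
        rw [insert_eq, union_comm, ← vadd_staircaseStep (disjoint_singleton_right.2 ha)
          (by simpa using (hta i hi).ne)]
        simp [staircaseLower, (hta i hi).not_gt]
      refine Set.mem_biUnion (mem_insert_of_mem hi) ?_
      rw [← hshift]
      exact ⟨x - μ a, hxi, by simp⟩
    · refine Set.mem_biUnion (mem_insert_self a t) ⟨?_, ?_⟩
      · simpa [staircaseLower, sum_insert ha, sum_congr rfl fun k hk => if_pos (hta k hk)]
          using not_le.1 hx
      · simpa [staircaseUpper, sum_insert ha, sum_congr rfl fun k hk => if_pos (hta k hk).le]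
          using hx₂

theorem sum_volume_inter_staircaseStep_le {s : Finset ι} (hμβ : ∀ k ∈ s, μ k ≤ β k) (U : Set ℝ) :
    ∑ i ∈ s, volume (U ∩ staircaseStep μ β s i) ≤ volume U := by
  have hmeas (i : ι) : MeasurableSet (staircaseStep μ β s i) := measurableSet_Ioc
  have h := sum_measure_le_measure_univ (μ := volume.restrict U) (s := s)
    (fun i _ => (hmeas i).nullMeasurableSet)
    fun i _ j _ hij => (pairwiseDisjoint_staircaseStep hμβ hij).aedisjoint
  simpa only [Measure.restrict_apply (hmeas _), Set.inter_comm, Measure.restrict_apply_univ]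
    using h

end Staircase

section MinkowskiSum

variable {ι : Type*} {A : ι → Set ℝ} {μ β : ι → ℝ}

theorem finsetSum_subset_Icc {s : Finset ι} (hμ : ∀ k ∈ s, μ k ∈ lowerBounds (A k))
    (hβ : ∀ k ∈ s, β k ∈ upperBounds (A k)) :
    ∑ k ∈ s, A k ⊆ Set.Icc (∑ k ∈ s, μ k) (∑ k ∈ s, β k) := by
  intro x hx
  obtain ⟨g, hg, rfl⟩ := (Set.mem_finsetSum s A x).1 hx
  exact ⟨sum_le_sum fun k hk => hμ k hk (hg hk), sum_le_sum fun k hk => hβ k hk (hg hk)⟩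

variable [LinearOrder ι]

theorem staircaseLower_mem_finsetSum {t : Finset ι} (hμ : ∀ k ∈ t, μ k ∈ A k)
    (hβ : ∀ k ∈ t, β k ∈ A k) (i : ι) : staircaseLower μ β t i ∈ ∑ k ∈ t, A k :=
  Set.finsetSum_mem_finsetSum t A _ fun k hk => by
    split_ifs
    exacts [hβ k hk, hμ k hk]

variable [Fintype ι]

theorem volume_inter_staircaseStep_le (hμ : ∀ k, μ k ∈ A k) (hβ : ∀ k, β k ∈ A k)
    {s : Finset ι} {i : ι} (hi : i ∈ s) :
    volume ((∑ k ∈ s, A k) ∩ staircaseStep μ β s i) ≤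
      volume ((∑ k, A k) ∩ staircaseStep μ β univ i) := by
  set τ := staircaseLower μ β sᶜ i
  have hτ : τ ∈ ∑ k ∈ sᶜ, A k :=
    staircaseLower_mem_finsetSum (fun k _ => hμ k) (fun k _ => hβ k) i
  have hsum : τ +ᵥ ∑ k ∈ s, A k ⊆ ∑ k, A k := by
    rw [← sum_add_sum_compl s A, add_comm]
    exact Set.vadd_set_subset_add hτ
  have hstep : τ +ᵥ staircaseStep μ β s i = staircaseStep μ β univ i := by
    rw [vadd_staircaseStep disjoint_compl_right (by simpa using hi), union_compl]
  calc volume ((∑ k ∈ s, A k) ∩ staircaseStep μ β s i)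
      = volume (τ +ᵥ ((∑ k ∈ s, A k) ∩ staircaseStep μ β s i)) := (measure_vadd _ _ _).symm
    _ ≤ volume ((∑ k, A k) ∩ staircaseStep μ β univ i) := by
      rw [Set.vadd_set_inter, hstep]
      exact measure_mono (Set.inter_subset_inter_left _ hsum)

theorem volume_finsetSum_le (hμ : ∀ k, IsLeast (A k) (μ k)) (hβ : ∀ k, IsGreatest (A k) (β k))
    (s : Finset ι) :
    volume (∑ k ∈ s, A k) ≤ ∑ i ∈ s, volume ((∑ k, A k) ∩ staircaseStep μ β univ i) := by
  set T := ∑ k ∈ s, A k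
  have hcover : T ⊆ insert (∑ k ∈ s, μ k) (⋃ i ∈ s, T ∩ staircaseStep μ β s i) := by
    intro x hx
    rcases eq_or_ne x (∑ k ∈ s, μ k) with rfl | hne
    · exact Set.mem_insert _ _
    have hIcc := finsetSum_subset_Icc (fun k _ => (hμ k).2) (fun k _ => (hβ k).2) hx
    have hIoc : x ∈ Set.Ioc (∑ k ∈ s, μ k) (∑ k ∈ s, β k) := by
      rw [← Set.Icc_sdiff_left]; exact ⟨hIcc, hne⟩
    obtain ⟨i, hi, hxi⟩ := Set.mem_iUnion₂.1 (Ioc_sum_subset_biUnion_staircaseStep s hIoc)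
    exact Set.mem_insert_of_mem _ (Set.mem_biUnion hi ⟨hx, hxi⟩)
  calc volume T ≤ volume (⋃ i ∈ s, T ∩ staircaseStep μ β s i) :=
        (measure_mono hcover).trans_eq (measure_congr (insert_ae_eq_self _ _))
    _ ≤ ∑ i ∈ s, volume (T ∩ staircaseStep μ β s i) := measure_biUnion_finset_le _ _
    _ ≤ _ := sum_le_sum fun i hi =>
        volume_inter_staircaseStep_le (fun k => (hμ k).1) (fun k => (hβ k).1) hi

end MinkowskiSum

theorem sum_sum_mem_eq_nsmul_sum {σ ι M : Type*} [Fintype σ] [Fintype ι] [DecidableEq ι]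
    [AddCommMonoid M] (S : σ → Finset ι) {q : ℕ} (hq : ∀ i, #{j | i ∈ S j} = q) (f : ι → M) :
    ∑ j, ∑ i ∈ S j, f i = q • ∑ i, f i := by
  rw [sum_comm' (t' := univ) (s' := fun i => {j | i ∈ S j}) (by simp), smul_sum]
  simp [hq]

theorem integer_fractional_superadditivity_general (m s q : ℕ)
    (A : Fin m → Set ℝ) (hne : ∀ i, (A i).Nonempty) (hc : ∀ i, IsCompact (A i))
    (S : Fin s → Finset (Fin m))
    (hcount : ∀ i : Fin m, (Finset.univ.filter (fun j => i ∈ S j)).card = q) :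
    (q : ℝ≥0∞) * volume (∑ i : Fin m, A i) ≥ ∑ j : Fin s, volume (∑ i ∈ S j, A i) := by
  choose μ hμ using fun i => (hc i).exists_isLeast (hne i)
  choose β hβ using fun i => (hc i).exists_isGreatest (hne i)
  calc ∑ j, volume (∑ i ∈ S j, A i)
      ≤ ∑ j, ∑ i ∈ S j, volume ((∑ k, A k) ∩ staircaseStep μ β univ i) :=
        sum_le_sum fun j _ => volume_finsetSum_le hμ hβ (S j)
    _ = q * ∑ i, volume ((∑ k, A k) ∩ staircaseStep μ β univ i) := by
        rw [sum_sum_mem_eq_nsmul_sum S hcount, nsmul_eq_mul]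
    _ ≤ q * volume (∑ k, A k) := by
        gcongr
        exact sum_volume_inter_staircaseStep_le (fun k _ => (hμ k).2 (hβ k).1) _

theorem integer_fractional_superadditivity (m s q : ℕ) (hm : 3 ≤ m) (hq : 1 ≤ q)
    (A : Fin m → Set ℝ) (hne : ∀ i, (A i).Nonempty) (hc : ∀ i, IsCompact (A i))
    (S : Fin s → Finset (Fin m)) (hSne : ∀ j, (S j).Nonempty)
    (hcount : ∀ i : Fin m, (Finset.univ.filter (fun j => i ∈ S j)).card = q) :
    (q : ℝ≥0∞) * volume (∑ i : Fin m, A i) ≥ ∑ j : Fin s, volume (∑ i ∈ S j, A i) :=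
  integer_fractional_superadditivity_general m s q A hne hc S hcount
end

section
/- Let v : 2^[m] → ℝ be a supermodular set function with v(∅) = 0 and v(S) ≥ 0 for all S. Then v is fractionally superadditive: for every fractional partition (𝒢, β) of [m], v([m]) ≥ ∑_{S∈𝒢} β(S)·v(S). -/
open Finset

theorem supermodular_implies_fractionally_superadditive (m : ℕ)
    (v : Finset (Fin m) → ℝ)
    (hsup : ∀ S T : Finset (Fin m), v S + v T ≤ v (S ∪ T) + v (S ∩ T))
    (hzero : v ∅ = 0) (hnonneg : ∀ S, 0 ≤ v S)
    (G : Finset (Finset (Fin m))) (β : Finset (Fin m) → ℝ)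
    (hGne : ∀ S ∈ G, S.Nonempty)
    (hβ : ∀ S ∈ G, 0 ≤ β S ∧ β S ≤ 1)
    (hfp : ∀ i : Fin m, ∑ S ∈ G.filter (fun S => i ∈ S), β S = 1) :
    v Finset.univ ≥ ∑ S ∈ G, β S * v S := by
  classical
  set d : Fin m → ℝ :=
    fun i => v (univ.filter (· ≤ i)) - v (univ.filter (· < i)) with hd
  -- Key inequality: v S ≤ ∑ i in S, d i
  have key : ∀ n (S : Finset (Fin m)), S.card = n → v S ≤ ∑ i ∈ S, d i := by
    intro n
    induction n with
    | zero =>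
      intro S hS
      rw [Finset.card_eq_zero] at hS
      subst hS
      simp [hzero]
    | succ n ih =>
      intro S hS
      have hne : S.Nonempty := Finset.card_pos.mp (by omega)
      set i := S.max' hne with hi
      have hiS : i ∈ S := S.max'_mem hne
      have hmax : ∀ j ∈ S, j ≤ i := fun j hj => S.le_max' j hj
      have hU : S ∪ univ.filter (· < i) = univ.filter (· ≤ i) := by
        ext j
        simp only [Finset.mem_union, Finset.mem_filter, Finset.mem_univ, true_and]
        constructor
        · rintro (hj | hj)
          · exact hmax j hj
          · exact le_of_lt hj
        · intro hj
          rcases lt_or_eq_of_le hj with h | h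
          · exact Or.inr h
          · exact Or.inl (h ▸ hiS)
      have hI : S ∩ univ.filter (· < i) = S.erase i := by
        ext j
        simp only [Finset.mem_inter, Finset.mem_filter, Finset.mem_univ, true_and,
          Finset.mem_erase]
        constructor
        · rintro ⟨hjS, hji⟩; exact ⟨ne_of_lt hji, hjS⟩
        · rintro ⟨hne', hjS⟩; exact ⟨hjS, lt_of_le_of_ne (hmax j hjS) hne'⟩
      have h1 := hsup S (univ.filter (· < i))
      rw [hU, hI] at h1
      have h2 : v S ≤ d i + v (S.erase i) := by
        simp only [hd]; linarith
      have h3 : v (S.erase i) ≤ ∑ j ∈ S.erase i, d j :=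
        ih (S.erase i) (by rw [Finset.card_erase_of_mem hiS, hS]; rfl)
      have h4 : ∑ j ∈ S.erase i, d j + d i = ∑ j ∈ S, d j :=
        Finset.sum_erase_add S d hiS
      linarith
  -- Telescoping equality on downward-closed sets
  have tele : ∀ n (S : Finset (Fin m)), S.card = n →
      (∀ j k : Fin m, j ≤ k → k ∈ S → j ∈ S) → v S = ∑ i ∈ S, d i := by
    intro n
    induction n with
    | zero =>
      intro S hS _
      rw [Finset.card_eq_zero] at hS
      subst hS
      simp [hzero]
    | succ n ih =>
      intro S hS hdc
      have hne : S.Nonempty := Finset.card_pos.mp (by omega)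
      set i := S.max' hne with hi
      have hiS : i ∈ S := S.max'_mem hne
      have hmax : ∀ j ∈ S, j ≤ i := fun j hj => S.le_max' j hj
      have hSle : univ.filter (· ≤ i) = S := by
        ext j
        simp only [Finset.mem_filter, Finset.mem_univ, true_and]
        exact ⟨fun h => hdc j i h hiS, fun h => hmax j h⟩
      have hSlt : univ.filter (· < i) = S.erase i := by
        ext j
        simp only [Finset.mem_filter, Finset.mem_univ, true_and, Finset.mem_erase]
        constructor
        · intro h; exact ⟨ne_of_lt h, hdc j i (le_of_lt h) hiS⟩
        · rintro ⟨hne', hjS⟩; exact lt_of_le_of_ne (hmax j hjS) hne'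
      have hdi : d i = v S - v (S.erase i) := by
        simp only [hd, hSle, hSlt]
      have hdc' : ∀ j k : Fin m, j ≤ k → k ∈ S.erase i → j ∈ S.erase i := by
        intro j k hjk hk
        rw [Finset.mem_erase] at hk ⊢
        refine ⟨?_, hdc j k hjk hk.2⟩
        intro hji
        exact hk.1 (le_antisymm (hmax k hk.2) (hji ▸ hjk))
      have h3 : v (S.erase i) = ∑ j ∈ S.erase i, d j :=
        ih (S.erase i) (by rw [Finset.card_erase_of_mem hiS, hS]; rfl) hdc'
      have h4 : ∑ j ∈ S.erase i, d j + d i = ∑ j ∈ S, d j :=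
        Finset.sum_erase_add S d hiS
      linarith
  have hvuniv : v univ = ∑ i, d i :=
    tele univ.card univ rfl (fun j k _ _ => Finset.mem_univ j)
  -- Main chain
  have step1 : ∑ S ∈ G, β S * v S ≤ ∑ S ∈ G, β S * ∑ i ∈ S, d i := by
    apply Finset.sum_le_sum
    intro S hS
    exact mul_le_mul_of_nonneg_left (key S.card S rfl) (hβ S hS).1
  have step2 : ∑ S ∈ G, β S * ∑ i ∈ S, d i = ∑ i, d i := by
    have : ∀ S ∈ G, β S * ∑ i ∈ S, d i
        = ∑ i : Fin m, if i ∈ S then β S * d i else 0 := by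
      intro S _
      rw [Finset.mul_sum, ← Finset.sum_filter]
      congr 1
      ext j
      simp [Finset.mem_filter]
    rw [Finset.sum_congr rfl this, Finset.sum_comm]
    apply Finset.sum_congr rfl
    intro i _
    rw [← Finset.sum_filter]
    have : ∑ S ∈ G.filter (fun S => i ∈ S), β S * d i
        = (∑ S ∈ G.filter (fun S => i ∈ S), β S) * d i := by
      rw [Finset.sum_mul]
    rw [this, hfp i, one_mul]
  rw [ge_iff_le, hvuniv]
  linarith
end

section
/- If A, B, C are nonempty compact sets in ℝ, then |A + B + C| + |conv(A)| ≥ |A + B| + |A + C|, where all sums are Minkowski sums, conv denotes convex hull, and |·| is one-dimensional Lebesgue measure. -/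
/-!
Let `b = max B` and `c = min C`. The translates `A + B + c` and `A + b + C` lie in `A + B + C` and
have measures `|A + B|` and `|A + C|`, so by inclusion–exclusion it suffices that their
intersection has measure at most `|conv A|`. A common point is `a + b' + c = a' + b + c'`; since
`b' ≤ b` and `c ≤ c'` it lies between `a' + b + c` and `a + b + c`, hence in `conv A + (b + c)`.
-/

open MeasureTheory Pointwise Set

theorem measure_add_singleton {G : Type*} [AddGroup G] [MeasurableSpace G] [MeasurableAdd G]
    (μ : Measure G) [μ.IsAddRightInvariant] (s : Set G) (g : G) : μ (s + {g}) = μ s := by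
  rw [add_singleton, image_add_right, measure_preimage_add_right]

theorem inter_add_subset_convexHull_add_singleton {𝕜 : Type*} [Field 𝕜] [LinearOrder 𝕜]
    [IsStrictOrderedRing 𝕜] {A B C : Set 𝕜} {b c : 𝕜} (hb : b ∈ upperBounds B)
    (hc : c ∈ lowerBounds C) :
    (A + B + {c}) ∩ (A + {b} + C) ⊆ convexHull 𝕜 A + {b + c} := by
  rintro x ⟨⟨_, ⟨a, ha, b', hb', rfl⟩, c₀, hc₀, rfl⟩, ⟨_, ⟨a', ha', b₀, hb₀, rfl⟩, c', hc', hx⟩⟩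
  rw [mem_singleton_iff] at hb₀ hc₀
  subst hb₀ hc₀
  refine ⟨a + b' - b₀, segment_subset_convexHull ha' ha (Icc_subset_segment ⟨?_, ?_⟩),
    b₀ + c₀, rfl, by ring⟩
  · linarith [hc hc']
  · linarith [hb hb']

theorem modified_supermodularity_one_dim_general (A B C : Set ℝ)
    (hB : B.Nonempty) (hC : C.Nonempty)
    (hAc : IsCompact A) (hBc : IsCompact B) (hCc : IsCompact C) :
    volume (A + B + C) + volume (convexHull ℝ A) ≥ volume (A + B) + volume (A + C) := by
  obtain ⟨b, hbB, hb⟩ := hBc.exists_isGreatest hB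
  obtain ⟨c, hcC, hc⟩ := hCc.exists_isLeast hC
  have hS : A + B + {c} ⊆ A + B + C := add_subset_add_left (singleton_subset_iff.2 hcC)
  have hT : A + {b} + C ⊆ A + B + C :=
    add_subset_add_right (add_subset_add_left (singleton_subset_iff.2 hbB))
  have hTm : MeasurableSet (A + {b} + C) :=
    ((hAc.add isCompact_singleton).add hCc).measurableSet
  calc volume (A + B) + volume (A + C) = volume (A + B + {c}) + volume (A + {b} + C) := by
        rw [add_right_comm A {b} C, measure_add_singleton, measure_add_singleton]
    _ = volume ((A + B + {c}) ∪ (A + {b} + C)) + volume ((A + B + {c}) ∩ (A + {b} + C)) :=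
        (measure_union_add_inter _ hTm).symm
    _ ≤ volume (A + B + C) + volume (convexHull ℝ A + {b + c}) :=
        add_le_add (measure_mono (union_subset hS hT))
          (measure_mono (inter_add_subset_convexHull_add_singleton hb hc))
    _ = volume (A + B + C) + volume (convexHull ℝ A) := by rw [measure_add_singleton]

theorem modified_supermodularity_one_dim (A B C : Set ℝ)
    (hA : A.Nonempty) (hB : B.Nonempty) (hC : C.Nonempty)
    (hAc : IsCompact A) (hBc : IsCompact B) (hCc : IsCompact C) :
    volume (A + B + C) + volume (convexHull ℝ A) ≥ volume (A + B) + volume (A + C) :=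
  modified_supermodularity_one_dim_general A B C hB hC hAc hBc hCc
end

section
/- Let A be a nonempty compact set in ℝ and define A(k) := (1/k)·(A + ⋯ + A) (Minkowski sum of k copies of A, scaled by 1/k). Then for every integer m ≥ 2, |A(m)| ≥ |A(m−1)|, i.e., the volume of the scaled Minkowski averages is nondecreasing in one dimension. -/
/-!
Let `a = min A`, `b = max A` and `S = A + ⋯ + A` (`n` copies), so that `S ⊆ [n a, n b]` and
`A + S ⊇ (a + S) ∪ (b + S)`, a translate of `S ∪ (β + S)` with `β = b - a`. Since `S` and its
translate by `n β` meet in at most one point, `|S| = |(n β + S) \ S|`, and walking from `S` to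
`n β + S` in `n` steps of length `β` gives `|(n β + S) \ S| ≤ n |(β + S) \ S|`. Hence
`|S ∪ (β + S)| = |S| + |(β + S) \ S| ≥ (1 + 1/n) |S|`, that is `(n + 1) |S| ≤ n |A + S|`,
which is the claim after rescaling.
-/

open MeasureTheory Pointwise Set
open scoped ENNReal

theorem measure_nsmul_vadd_diff_le {G α : Type*} [AddGroup G] [AddAction G α] [MeasurableSpace α]
    (μ : Measure α) [VAddInvariantMeasure G α μ] (g : G) (s : Set α) (n : ℕ) :
    μ (((n • g) +ᵥ s) \ s) ≤ n * μ ((g +ᵥ s) \ s) := by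
  induction n with
  | zero => simp
  | succ n ih =>
    have hcover : ((n + 1) • g +ᵥ s) \ s ⊆ (g +ᵥ ((n • g +ᵥ s) \ s)) ∪ ((g +ᵥ s) \ s) := by
      rw [succ_nsmul', add_vadd, vadd_set_sdiff]
      intro x ⟨hx, hxs⟩
      by_cases hgs : x ∈ g +ᵥ s
      · exact Or.inr ⟨hgs, hxs⟩
      · exact Or.inl ⟨hx, hgs⟩
    calc μ (((n + 1) • g +ᵥ s) \ s)
        ≤ μ (g +ᵥ ((n • g +ᵥ s) \ s)) + μ ((g +ᵥ s) \ s) :=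
          (measure_mono hcover).trans (measure_union_le _ _)
      _ ≤ n * μ ((g +ᵥ s) \ s) + μ ((g +ᵥ s) \ s) := by
          rw [measure_vadd]
          gcongr
      _ = (n + 1 : ℕ) * μ ((g +ᵥ s) \ s) := by push_cast; ring

section OrderedGroup

variable {α : Type*} [AddCommGroup α] [PartialOrder α] [IsOrderedAddMonoid α]

theorem vadd_inter_subset_singleton_of_subset_Icc {s : Set α} {c t : α}
    (hs : s ⊆ Icc c (c + t)) : (t +ᵥ s) ∩ s ⊆ {c + t} := by
  rintro _ ⟨⟨y, hy, rfl⟩, hx⟩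
  have hlow : c + t ≤ t +ᵥ y := by
    rw [vadd_eq_add, add_comm t]
    exact add_le_add_left (hs hy).1 t
  exact le_antisymm (hs hx).2 hlow

variable [MeasurableSpace α] (μ : Measure α) [NullSingletonClass μ] [VAddInvariantMeasure α α μ]

theorem measure_vadd_diff_eq_of_subset_Icc {s : Set α} {c t : α} (hs : s ⊆ Icc c (c + t)) :
    μ ((t +ᵥ s) \ s) = μ s := by
  rw [measure_sdiff_null' (measure_mono_null (vadd_inter_subset_singleton_of_subset_Icc hs)
    (measure_singleton _)), measure_vadd]

theorem succ_mul_measure_le_mul_measure_union_vadd {s : Set α} (hs : MeasurableSet s) {c t : α}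
    {n : ℕ} (hsc : s ⊆ Icc c (c + n • t)) :
    (n + 1) * μ s ≤ n * μ (s ∪ (t +ᵥ s)) := by
  have hgrowth : μ s ≤ n * μ ((t +ᵥ s) \ s) := by
    rw [← measure_vadd_diff_eq_of_subset_Icc μ hsc]
    exact measure_nsmul_vadd_diff_le μ t s n
  have hunion : μ (s ∪ (t +ᵥ s)) = μ s + μ ((t +ᵥ s) \ s) := by
    rw [← union_sdiff_self, measure_union' disjoint_sdiff_right hs]
  calc (n + 1) * μ s = n * μ s + μ s := by ring
    _ ≤ n * μ s + n * μ ((t +ᵥ s) \ s) := by gcongr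
    _ = n * μ (s ∪ (t +ᵥ s)) := by rw [hunion, mul_add]

end OrderedGroup

theorem Set.nsmul_subset_Icc {α : Type*} [AddCommMonoid α] [PartialOrder α]
    [IsOrderedAddMonoid α] {s : Set α} {a b : α} (hs : s ⊆ Icc a b) (n : ℕ) :
    n • s ⊆ Icc (n • a) (n • b) := by
  induction n with
  | zero => simp
  | succ n ih =>
    simp only [succ_nsmul]
    exact (add_subset_add ih hs).trans (Icc_add_Icc_subset _ _ _ _)

theorem IsCompact.nsmul_set {M : Type*} [TopologicalSpace M] [AddMonoid M] [ContinuousAdd M]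
    {s : Set M} (hs : IsCompact s) (n : ℕ) : IsCompact (n • s) := by
  induction n with
  | zero => simp
  | succ n ih => simpa only [succ_nsmul] using ih.add hs

theorem Real.succ_mul_volume_nsmul_le {A : Set ℝ} (hA : A.Nonempty) (hAc : IsCompact A) (n : ℕ) :
    (n + 1) * volume (n • A) ≤ n * volume ((n + 1) • A) := by
  obtain ⟨a, haA, ha⟩ := hAc.exists_isLeast hA
  obtain ⟨b, hbA, hb⟩ := hAc.exists_isGreatest hA
  have hS : n • A ⊆ Icc (n • a) (n • a + n • (b - a)) := by
    rw [← nsmul_add, add_sub_cancel]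
    exact nsmul_subset_Icc (fun x hx => ⟨ha hx, hb hx⟩) n
  have htranslate : a +ᵥ (n • A ∪ ((b - a) +ᵥ n • A)) ⊆ (n + 1) • A := by
    rw [vadd_set_union, vadd_vadd, add_sub_cancel, succ_nsmul']
    exact union_subset (vadd_set_subset_add haA) (vadd_set_subset_add hbA)
  calc (n + 1) * volume (n • A)
      ≤ n * volume (n • A ∪ ((b - a) +ᵥ n • A)) :=
        succ_mul_measure_le_mul_measure_union_vadd volume
          (hAc.nsmul_set n).isClosed.measurableSet hS
    _ ≤ n * volume ((n + 1) • A) := by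
        rw [← measure_vadd volume a]
        gcongr

theorem Real.volume_inv_natCast_smul {k : ℕ} (hk : 0 < k) (s : Set ℝ) :
    volume ((k : ℝ)⁻¹ • s) = volume s / k := by
  rw [Measure.addHaar_smul_of_nonneg _ (by positivity), Module.finrank_self, pow_one,
    ENNReal.ofReal_inv_of_pos (by positivity), ENNReal.ofReal_natCast, ENNReal.div_eq_inv_mul]

theorem minkowski_average_monotone (A : Set ℝ) (hA : A.Nonempty) (hAc : IsCompact A)
    (m : ℕ) (hm : 2 ≤ m) :
    volume (((m : ℝ)⁻¹) • ∑ _i ∈ Finset.range m, A) ≥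
      volume ((((m - 1 : ℕ) : ℝ)⁻¹) • ∑ _i ∈ Finset.range (m - 1), A) := by
  obtain ⟨n, rfl⟩ : ∃ n, m = n + 1 := ⟨m - 1, by omega⟩
  have hn : 0 < n := by omega
  simp only [Finset.sum_const, Finset.card_range, Nat.add_sub_cancel, ge_iff_le]
  rw [Real.volume_inv_natCast_smul hn, Real.volume_inv_natCast_smul n.succ_pos,
    ENNReal.le_div_iff_mul_le (by simp) (by simp), ← ENNReal.mul_div_right_comm,
    ENNReal.div_le_iff (Nat.cast_ne_zero.mpr hn.ne') (ENNReal.natCast_ne_top n),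
    mul_comm, mul_comm (volume _)]
  exact_mod_cast Real.succ_mul_volume_nsmul_le hA hAc n
end
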